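/- arXiv:2111.10729 — 3 statements merged into one kernel-verified Lean document; each statement's English description precedes it below -/
import Mathlib

section
/- Let μ be an isotropic measure on S^{n-1} and H ∈ G_{n,k}. Then the measure μ̄ on S^{n-1} ∩ H defined by μ̄(A) = ∫_{S^{n-1}∖H^⊥} 1_A(P_H u / ‖P_H u‖) ‖P_H u‖² dμ(u) is isotropic on the unit sphere of H; that is, ∫_{S^{n-1}∩H} ⟨y,w⟩² dμ̄(w) = ‖y‖² for all y ∈ H. Moreover μ̄(S^{n-1} ∩ H) = k. -/
/-!
For `y ∈ H` we have `⟪y, u⟫ = ⟪y, P_H u⟫`, so the weight `‖P_H u‖²` exactly cancels the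
normalisation `P_H u / ‖P_H u‖`, and `∫ ⟪y, w⟫² dμ̄ = ∫ ⟪y, u⟫² dμ = ‖y‖²`. The total mass is
`∫ ‖P_H u‖² dμ = ∑ᵢ ∫ ⟪eᵢ, u⟫² dμ = k` for an orthonormal basis `(eᵢ)` of `H`.
-/

open MeasureTheory
open scoped RealInnerProductSpace

variable {E : Type*} [NormedAddCommGroup E] [InnerProductSpace ℝ E]

namespace Submodule

variable (H : Submodule ℝ E) [H.HasOrthogonalProjection]

/-- Also true when `P_H u = 0`: then both sides vanish, as `0⁻¹ = 0` and `⟪y, u⟫ = ⟪y, P_H u⟫`. -/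
theorem sq_norm_orthogonalProjectionOnto_mul_inner_sq (y : H) (u : E) :
    ‖(H.orthogonalProjectionOnto u : E)‖ ^ 2 *
      ⟪y, ‖(H.orthogonalProjectionOnto u : E)‖⁻¹ • H.orthogonalProjectionOnto u⟫ ^ 2 =
      ⟪(y : E), u⟫ ^ 2 := by
  rw [real_inner_smul_right, ← inner_orthogonalProjectionOnto_eq_of_mem_left]
  rcases eq_or_ne (H.orthogonalProjectionOnto u) 0 with hu | hu
  · simp [hu]
  · have : ‖(H.orthogonalProjectionOnto u : E)‖ ≠ 0 := by
      rwa [norm_ne_zero_iff, ne_eq, ZeroMemClass.coe_eq_zero]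
    field_simp

theorem sum_sq_inner_eq_sq_norm_orthogonalProjectionOnto {ι : Type*} [Fintype ι]
    (b : OrthonormalBasis ι ℝ H) (u : E) :
    ∑ i, ⟪(b i : E), u⟫ ^ 2 = ‖(H.orthogonalProjectionOnto u : E)‖ ^ 2 := by
  simp_rw [← inner_orthogonalProjectionOnto_eq_of_mem_left]
  exact b.sum_sq_inner_right _

end Submodule

variable [MeasurableSpace E]

def IsIsotropic (μ : Measure E) : Prop :=
  ∀ x : E, ∫ u, ⟪x, u⟫ ^ 2 ∂μ = ‖x‖ ^ 2

noncomputable def projectedMeasure (H : Submodule ℝ E) [H.HasOrthogonalProjection]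
    (μ : Measure E) : Measure H :=
  Measure.map (fun u => ‖(H.orthogonalProjectionOnto u : E)‖⁻¹ • H.orthogonalProjectionOnto u)
    ((μ.restrict {u | (H.orthogonalProjectionOnto u : E) ≠ 0}).withDensity
      fun u => ENNReal.ofReal (‖(H.orthogonalProjectionOnto u : E)‖ ^ 2))

theorem lintegral_projectedMeasure [BorelSpace E] (H : Submodule ℝ E) [H.HasOrthogonalProjection]
    (μ : Measure E) {g : H → ENNReal} (hg : Measurable g) :
    ∫⁻ w, g w ∂projectedMeasure H μ =
      ∫⁻ u, ENNReal.ofReal (‖(H.orthogonalProjectionOnto u : E)‖ ^ 2) *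
        g (‖(H.orthogonalProjectionOnto u : E)‖⁻¹ • H.orthogonalProjectionOnto u) ∂μ := by
  rw [projectedMeasure, lintegral_map hg (by fun_prop),
    lintegral_withDensity_eq_lintegral_mul _ (by fun_prop) (by fun_prop)]
  refine setLIntegral_eq_of_support_subset fun u hu => ?_
  contrapose! hu
  simp_all

namespace IsIsotropic

variable {μ : Measure E}

theorem integrable_inner_sq (hμ : IsIsotropic μ) (x : E) :
    Integrable (fun u => ⟪x, u⟫ ^ 2) μ := by
  -- otherwise the Bochner integral is `0`, which forces `x = 0`
  by_contra hx
  obtain rfl : x = 0 := by simpa [integral_undef hx, eq_comm] using hμ x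
  simp at hx

theorem lintegral_inner_sq (hμ : IsIsotropic μ) (x : E) :
    ∫⁻ u, ENNReal.ofReal (⟪x, u⟫ ^ 2) ∂μ = ENNReal.ofReal (‖x‖ ^ 2) := by
  rw [← ofReal_integral_eq_lintegral_ofReal (hμ.integrable_inner_sq x)
    (ae_of_all _ fun _ => sq_nonneg _), hμ x]

theorem lintegral_sq_norm_orthogonalProjectionOnto [OpensMeasurableSpace E]
    (hμ : IsIsotropic μ) (H : Submodule ℝ E) [FiniteDimensional ℝ H] :
    ∫⁻ u, ENNReal.ofReal (‖(H.orthogonalProjectionOnto u : E)‖ ^ 2) ∂μ = Module.finrank ℝ H := by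
  let b := stdOrthonormalBasis ℝ H
  have hb : ∀ i, ‖(b i : E)‖ = 1 := fun i => b.orthonormal.1 i
  simp_rw [← H.sum_sq_inner_eq_sq_norm_orthogonalProjectionOnto b,
    ENNReal.ofReal_sum_of_nonneg fun _ _ => sq_nonneg _]
  rw [lintegral_finsetSum _ fun i _ => by fun_prop]
  simp [hμ.lintegral_inner_sq, hb]

variable [BorelSpace E] (H : Submodule ℝ E)

protected theorem projectedMeasure (hμ : IsIsotropic μ) [H.HasOrthogonalProjection] :
    IsIsotropic (projectedMeasure H μ) := fun y => by
  rw [integral_eq_lintegral_of_nonneg_ae (ae_of_all _ fun _ => sq_nonneg _) (by fun_prop),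
    lintegral_projectedMeasure H μ (by fun_prop)]
  simp_rw [← ENNReal.ofReal_mul (sq_nonneg _), H.sq_norm_orthogonalProjectionOnto_mul_inner_sq]
  rw [hμ.lintegral_inner_sq, ENNReal.toReal_ofReal (sq_nonneg _), Submodule.coe_norm]

theorem projectedMeasure_univ (hμ : IsIsotropic μ) [FiniteDimensional ℝ H] :
    projectedMeasure H μ Set.univ = Module.finrank ℝ H := by
  rw [← lintegral_one, lintegral_projectedMeasure H μ measurable_const]
  simpa using hμ.lintegral_sq_norm_orthogonalProjectionOnto H

end IsIsotropic

theorem stmt2_general (n k : ℕ) (μ : Measure (EuclideanSpace ℝ (Fin n)))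
    (hiso : ∀ x : EuclideanSpace ℝ (Fin n), ∫ u, ⟪x, u⟫ ^ 2 ∂μ = ‖x‖ ^ 2)
    (H : Submodule ℝ (EuclideanSpace ℝ (Fin n))) (hH : Module.finrank ℝ H = k)
    (μbar : Measure H)
    (hμbar : μbar = Measure.map
      (fun u => (‖(Submodule.orthogonalProjectionOnto H u : EuclideanSpace ℝ (Fin n))‖)⁻¹ • Submodule.orthogonalProjectionOnto H u)
      ((μ.restrict {u | (Submodule.orthogonalProjectionOnto H u : EuclideanSpace ℝ (Fin n)) ≠ 0}).withDensity
        (fun u => ENNReal.ofReal (‖(Submodule.orthogonalProjectionOnto H u : EuclideanSpace ℝ (Fin n))‖ ^ 2)))) :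
    (∀ y : H, ∫ w, ⟪y, w⟫ ^ 2 ∂μbar = ‖y‖ ^ 2) ∧ μbar Set.univ = k := by
  have hμ : IsIsotropic μ := hiso
  obtain rfl : μbar = projectedMeasure H μ := hμbar
  subst hH
  exact ⟨hμ.projectedMeasure H, hμ.projectedMeasure_univ H⟩

theorem stmt2 (n k : ℕ) (μ : Measure (EuclideanSpace ℝ (Fin n))) [IsFiniteMeasure μ]
    (hsph : μ (Metric.sphere (0 : EuclideanSpace ℝ (Fin n)) 1)ᶜ = 0)
    (hiso : ∀ x : EuclideanSpace ℝ (Fin n), ∫ u, ⟪x, u⟫ ^ 2 ∂μ = ‖x‖ ^ 2)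
    (H : Submodule ℝ (EuclideanSpace ℝ (Fin n))) (hH : Module.finrank ℝ H = k)
    (μbar : Measure H)
    (hμbar : μbar = Measure.map
      (fun u => (‖(Submodule.orthogonalProjectionOnto H u : EuclideanSpace ℝ (Fin n))‖)⁻¹ • Submodule.orthogonalProjectionOnto H u)
      ((μ.restrict {u | (Submodule.orthogonalProjectionOnto H u : EuclideanSpace ℝ (Fin n)) ≠ 0}).withDensity
        (fun u => ENNReal.ofReal (‖(Submodule.orthogonalProjectionOnto H u : EuclideanSpace ℝ (Fin n))‖ ^ 2)))) :
    (∀ y : H, ∫ w, ⟪y, w⟫ ^ 2 ∂μbar = ‖y‖ ^ 2) ∧ μbar Set.univ = k :=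
  stmt2_general n k μ hiso H hH μbar hμbar
end

section
/- Let μ be an even isotropic measure on S^{n-1} and H ∈ G_{n,k}. For every x ∈ H, the support function of the section of the polar of C = conv(supp μ) is bounded as h_{C°∩H}(x) ≤ ∫_{S^{n-1}∖H^⊥} |⟨x, P_H u⟩| dμ(u). -/
/-!
Isotropy polarizes to `⟪x, y⟫ = ∫ ⟪x, u⟫ ⟪y, u⟫ dμ(u)`. For `y ∈ C°` evenness puts both `u` and
`-u` in `C` for every `u ∈ supp μ`, so `|⟪y, u⟫| ≤ 1` for `μ`-a.e. `u` and therefore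
`⟪x, y⟫ ≤ ∫ |⟪x, u⟫| dμ(u)`. For `x ∈ H` one has `⟪x, u⟫ = ⟪x, P_H u⟫`, and this vanishes where
`P_H u = 0`, so the last integral is the one over `{P_H u ≠ 0}`.
-/

open MeasureTheory
open scoped RealInnerProductSpace

/-- The support of a measure. -/
def msupport {α : Type*} [TopologicalSpace α] [MeasurableSpace α] (μ : Measure α) : Set α :=
  {x | ∀ U ∈ nhds x, 0 < μ U}

/-- Support function `h_K(x) = sup {⟨x,y⟩ : y ∈ K}`. -/
noncomputable def suppFn {n : ℕ} (K : Set (EuclideanSpace ℝ (Fin n)))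
    (x : EuclideanSpace ℝ (Fin n)) : ℝ :=
  sSup ((fun y => ⟪x, y⟫) '' K)

/-- The polar body `K° = {x : ⟨x,y⟩ ≤ 1 for all y ∈ K}`. -/
def polarBody {n : ℕ} (K : Set (EuclideanSpace ℝ (Fin n))) : Set (EuclideanSpace ℝ (Fin n)) :=
  {x | ∀ y ∈ K, ⟪x, y⟫ ≤ 1}

lemma msupport_eq_support {α : Type*} [TopologicalSpace α] [MeasurableSpace α]
    (μ : Measure α) : msupport μ = μ.support := by
  ext x
  exact (Measure.mem_support_iff_forall x).symm

lemma neg_mem_msupport {α : Type*} [TopologicalSpace α] [MeasurableSpace α] [InvolutiveNeg α]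
    [ContinuousNeg α] [MeasurableNeg α] {μ : Measure α} (heven : Measure.map (fun u => -u) μ = μ)
    {u : α} (hu : u ∈ msupport μ) : -u ∈ msupport μ := by
  intro U hU
  have hpre : (fun w : α => -w) ⁻¹' U ∈ nhds u := continuous_neg.continuousAt.preimage_mem_nhds hU
  calc 0 < μ ((fun w : α => -w) ⁻¹' U) := hu _ hpre
    _ ≤ Measure.map (fun u => -u) μ U := Measure.le_map_apply measurable_neg.aemeasurable U
    _ = μ U := by rw [heven]

lemma abs_inner_le_one_of_mem_polarBody {n : ℕ} {K : Set (EuclideanSpace ℝ (Fin n))}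
    {y u : EuclideanSpace ℝ (Fin n)} (hy : y ∈ polarBody K) (hu : u ∈ K) (hnu : -u ∈ K) :
    |⟪y, u⟫| ≤ 1 := by
  have hneg := hy (-u) hnu
  rw [inner_neg_right] at hneg
  exact abs_le.mpr ⟨by linarith, hy u hu⟩

lemma ae_abs_inner_le_one_of_mem_polarBody {n : ℕ} {μ : Measure (EuclideanSpace ℝ (Fin n))}
    (heven : Measure.map (fun u => -u) μ = μ) {K : Set (EuclideanSpace ℝ (Fin n))}
    (hK : msupport μ ⊆ K) {y : EuclideanSpace ℝ (Fin n)} (hy : y ∈ polarBody K) :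
    ∀ᵐ u ∂μ, |⟪y, u⟫| ≤ 1 := by
  filter_upwards [Measure.support_mem_ae (μ := μ)] with u hu
  rw [← msupport_eq_support] at hu
  exact abs_inner_le_one_of_mem_polarBody hy (hK hu) (hK (neg_mem_msupport heven hu))

section InnerProductSpace

variable {E : Type*} [NormedAddCommGroup E] [InnerProductSpace ℝ E]

lemma inner_mul_inner_eq_polarization (a b u : E) :
    ⟪a, u⟫ * ⟪b, u⟫ = (⟪a + b, u⟫ ^ 2 - ⟪a - b, u⟫ ^ 2) / 4 := by
  rw [inner_add_left, inner_sub_left]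
  ring

variable [MeasurableSpace E] {μ : Measure E}

/-- The Bochner integral of a non-integrable function is `0`, so isotropy forces integrability. -/
lemma integrable_inner_sq_of_isotropic (hiso : ∀ x : E, ∫ u, ⟪x, u⟫ ^ 2 ∂μ = ‖x‖ ^ 2) (x : E) :
    Integrable (fun u => ⟪x, u⟫ ^ 2) μ := by
  rcases eq_or_ne x 0 with rfl | hx
  · simp
  · exact Integrable.of_integral_ne_zero (by rw [hiso]; positivity)

lemma integrable_inner_mul_inner_of_isotropic
    (hiso : ∀ x : E, ∫ u, ⟪x, u⟫ ^ 2 ∂μ = ‖x‖ ^ 2) (a b : E) :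
    Integrable (fun u => ⟪a, u⟫ * ⟪b, u⟫) μ := by
  simp_rw [inner_mul_inner_eq_polarization a b]
  exact ((integrable_inner_sq_of_isotropic hiso _).sub
    (integrable_inner_sq_of_isotropic hiso _)).div_const 4

lemma integral_inner_mul_inner_of_isotropic
    (hiso : ∀ x : E, ∫ u, ⟪x, u⟫ ^ 2 ∂μ = ‖x‖ ^ 2) (a b : E) :
    ∫ u, ⟪a, u⟫ * ⟪b, u⟫ ∂μ = ⟪a, b⟫ := by
  simp_rw [inner_mul_inner_eq_polarization a b]
  rw [integral_div, integral_sub (integrable_inner_sq_of_isotropic hiso _)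
    (integrable_inner_sq_of_isotropic hiso _), hiso, hiso, norm_add_sq_real, norm_sub_sq_real]
  ring

lemma integrable_abs_inner_of_isotropic [OpensMeasurableSpace E] [IsFiniteMeasure μ]
    (hiso : ∀ x : E, ∫ u, ⟪x, u⟫ ^ 2 ∂μ = ‖x‖ ^ 2) (x : E) :
    Integrable (fun u => |⟪x, u⟫|) μ := by
  have hmeas : AEStronglyMeasurable (fun u => ⟪x, u⟫) μ :=
    (continuous_const.inner continuous_id).aestronglyMeasurable
  have hL2 : MemLp (fun u => ⟪x, u⟫) 2 μ :=
    (memLp_two_iff_integrable_sq hmeas).mpr (integrable_inner_sq_of_isotropic hiso x)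
  exact (hL2.integrable one_le_two).abs

lemma inner_le_integral_abs_inner_of_isotropic [OpensMeasurableSpace E] [IsFiniteMeasure μ]
    (hiso : ∀ x : E, ∫ u, ⟪x, u⟫ ^ 2 ∂μ = ‖x‖ ^ 2) (x : E) {y : E}
    (hy : ∀ᵐ u ∂μ, |⟪y, u⟫| ≤ 1) :
    ⟪x, y⟫ ≤ ∫ u, |⟪x, u⟫| ∂μ := by
  have hpointwise : ∀ᵐ u ∂μ, ⟪x, u⟫ * ⟪y, u⟫ ≤ |⟪x, u⟫| := by
    filter_upwards [hy] with u hu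
    calc ⟪x, u⟫ * ⟪y, u⟫ ≤ |⟪x, u⟫| * |⟪y, u⟫| := (le_abs_self _).trans (abs_mul _ _).le
      _ ≤ |⟪x, u⟫| := mul_le_of_le_one_right (abs_nonneg _) hu
  calc ⟪x, y⟫ = ∫ u, ⟪x, u⟫ * ⟪y, u⟫ ∂μ := (integral_inner_mul_inner_of_isotropic hiso x y).symm
    _ ≤ ∫ u, |⟪x, u⟫| ∂μ := integral_mono_ae (integrable_inner_mul_inner_of_isotropic hiso x y)
        (integrable_abs_inner_of_isotropic hiso x) hpointwise

lemma setIntegral_abs_inner_orthogonalProjectionOnto (μ : Measure E) {H : Submodule ℝ E}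
    [H.HasOrthogonalProjection] {x : E} (hx : x ∈ H) :
    ∫ u in {u | (H.orthogonalProjectionOnto u : E) ≠ 0},
        |⟪x, (H.orthogonalProjectionOnto u : E)⟫| ∂μ = ∫ u, |⟪x, u⟫| ∂μ := by
  have hproj (u : E) : ⟪x, (H.orthogonalProjectionOnto u : E)⟫ = ⟪x, u⟫ :=
    H.inner_orthogonalProjectionOnto_eq_of_mem_left ⟨x, hx⟩ u
  rw [setIntegral_eq_integral_of_forall_compl_eq_zero fun u hu => by
    simp only [Set.mem_ofPred_eq, not_not] at hu
    simp [hu]]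
  simp_rw [hproj]

theorem stmt15_general (n : ℕ) (μ : Measure (EuclideanSpace ℝ (Fin n))) [IsFiniteMeasure μ]
    (hiso : ∀ x : EuclideanSpace ℝ (Fin n), ∫ u, ⟪x, u⟫ ^ 2 ∂μ = ‖x‖ ^ 2)
    (heven : Measure.map (fun u => -u) μ = μ)
    (H : Submodule ℝ (EuclideanSpace ℝ (Fin n)))
    (C : Set (EuclideanSpace ℝ (Fin n))) (hC : C = convexHull ℝ (msupport μ))
    (x : EuclideanSpace ℝ (Fin n)) (hx : x ∈ H) :
    suppFn (polarBody C ∩ (H : Set (EuclideanSpace ℝ (Fin n)))) x ≤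
      ∫ u in {u | (Submodule.orthogonalProjection H u : EuclideanSpace ℝ (Fin n)) ≠ 0},
        |⟪x, (Submodule.orthogonalProjection H u : EuclideanSpace ℝ (Fin n))⟫| ∂μ := by
  rw [setIntegral_abs_inner_orthogonalProjectionOnto μ hx]
  refine Real.sSup_le ?_ (integral_nonneg fun u => abs_nonneg _)
  rintro r ⟨y, ⟨hyC, -⟩, rfl⟩
  exact inner_le_integral_abs_inner_of_isotropic hiso x
    (ae_abs_inner_le_one_of_mem_polarBody heven (hC ▸ subset_convexHull ℝ _) hyC)

theorem stmt15 (n k : ℕ) (μ : Measure (EuclideanSpace ℝ (Fin n))) [IsFiniteMeasure μ]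
    (hsph : μ (Metric.sphere (0 : EuclideanSpace ℝ (Fin n)) 1)ᶜ = 0)
    (hiso : ∀ x : EuclideanSpace ℝ (Fin n), ∫ u, ⟪x, u⟫ ^ 2 ∂μ = ‖x‖ ^ 2)
    (heven : Measure.map (fun u => -u) μ = μ)
    (H : Submodule ℝ (EuclideanSpace ℝ (Fin n))) (hH : Module.finrank ℝ H = k)
    (C : Set (EuclideanSpace ℝ (Fin n))) (hC : C = convexHull ℝ (msupport μ))
    (x : EuclideanSpace ℝ (Fin n)) (hx : x ∈ H) :
    suppFn (polarBody C ∩ (H : Set (EuclideanSpace ℝ (Fin n)))) x ≤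
      ∫ u in {u | (Submodule.orthogonalProjection H u : EuclideanSpace ℝ (Fin n)) ≠ 0},
        |⟪x, (Submodule.orthogonalProjection H u : EuclideanSpace ℝ (Fin n))⟫| ∂μ :=
  stmt15_general n μ hiso heven H C hC x hx
end InnerProductSpace
end

section
/- Let ν be a finite isotropic measure on the unit sphere of a k-dimensional subspace H whose support is a finite set {w_1, …, w_m} with m ≤ k (i.e., at most k points up to sign). Then m = k and {w_1, …, w_k} forms an orthonormal basis of H, and each atom has ν-mass 1. -/
open scoped RealInnerProductSpace

theorem stmt17 (n k m : ℕ) (H : Submodule ℝ (EuclideanSpace ℝ (Fin n)))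
    (hH : Module.finrank ℝ H = k) (hm : m ≤ k)
    (w : Fin m → EuclideanSpace ℝ (Fin n)) (c : Fin m → ℝ)
    (hw_inj : Function.Injective w)
    (hw_mem : ∀ i, w i ∈ H) (hw_unit : ∀ i, ‖w i‖ = 1)
    (hc_pos : ∀ i, 0 < c i)
    (hiso : ∀ y ∈ H, ∑ i, c i * ⟪y, w i⟫ ^ 2 = ‖y‖ ^ 2) :
    m = k ∧ Orthonormal ℝ w ∧ ∀ i, c i = 1 := by
  classical
  -- self inner products
  have hself : ∀ j, ⟪w j, w j⟫ = 1 := by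
    intro j
    rw [real_inner_self_eq_norm_sq, hw_unit j, one_pow]
  have key : ∀ j, c j + ∑ i ∈ Finset.univ.erase j, c i * ⟪w j, w i⟫ ^ 2 = 1 := by
    intro j
    have h := hiso (w j) (hw_mem j)
    rw [hw_unit j, one_pow] at h
    rw [← h, ← Finset.add_sum_erase _ _ (Finset.mem_univ j), hself j]
    ring_nf
  have cross_nonneg : ∀ j, 0 ≤ ∑ i ∈ Finset.univ.erase j, c i * ⟪w j, w i⟫ ^ 2 := by
    intro j
    exact Finset.sum_nonneg fun i _ => mul_nonneg (hc_pos i).le (sq_nonneg _)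
  have hcle : ∀ j, c j ≤ 1 := fun j => by
    have := key j; have := cross_nonneg j; linarith
  -- Parseval: sum of c_i equals k
  let b := stdOrthonormalBasis ℝ H
  have hbmem : ∀ j, ((b j : H) : EuclideanSpace ℝ (Fin n)) ∈ H := fun j => (b j).2
  have hbnorm : ∀ j, ‖((b j : H) : EuclideanSpace ℝ (Fin n))‖ = 1 := by
    intro j
    have := b.orthonormal.1 j
    exact this
  have parseval : ∀ i, ∑ j, ⟪((b j : H) : EuclideanSpace ℝ (Fin n)), w i⟫ ^ 2 = 1 := by
    intro i
    have h := b.sum_inner_mul_inner (⟨w i, hw_mem i⟩ : H) (⟨w i, hw_mem i⟩ : H)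
    have hv : (⟪(⟨w i, hw_mem i⟩ : H), (⟨w i, hw_mem i⟩ : H)⟫ : ℝ) = 1 := by
      rw [Submodule.coe_inner]
      exact hself i
    rw [hv] at h
    rw [← h]
    refine Finset.sum_congr rfl fun j _ => ?_
    rw [sq]
    rw [Submodule.coe_inner, Submodule.coe_inner]
    rw [real_inner_comm ((b j : H) : EuclideanSpace ℝ (Fin n)) (w i)]
  have hsumc : ∑ i, c i = (k : ℝ) := by
    have h1 : ∀ j, ∑ i, c i * ⟪((b j : H) : EuclideanSpace ℝ (Fin n)), w i⟫ ^ 2 = 1 := by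
      intro j
      rw [hiso _ (hbmem j), hbnorm j, one_pow]
    have h2 : ∑ j, ∑ i, c i * ⟪((b j : H) : EuclideanSpace ℝ (Fin n)), w i⟫ ^ 2
        = (Module.finrank ℝ H : ℝ) := by
      rw [Finset.sum_congr rfl fun j _ => h1 j]
      simp
    rw [Finset.sum_comm] at h2
    have h3 : ∀ i, ∑ j, c i * ⟪((b j : H) : EuclideanSpace ℝ (Fin n)), w i⟫ ^ 2 = c i := by
      intro i
      rw [← Finset.mul_sum, parseval i, mul_one]
    rw [Finset.sum_congr rfl fun i _ => h3 i] at h2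
    rw [h2, hH]
  -- m = k
  have hmk : m = k := by
    by_contra hne
    have hlt : m < k := lt_of_le_of_ne hm hne
    have : ∑ i, c i ≤ (m : ℝ) := by
      calc ∑ i : Fin m, c i ≤ ∑ _i : Fin m, (1:ℝ) := Finset.sum_le_sum fun i _ => hcle i
        _ = m := by simp
    rw [hsumc] at this
    exact absurd (Nat.cast_le.mp this) (not_le.mpr hlt)
  -- c i = 1
  have hc1 : ∀ i, c i = 1 := by
    by_contra hne
    push_neg at hne
    obtain ⟨j, hj⟩ := hne
    have hjlt : c j < 1 := lt_of_le_of_ne (hcle j) hj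
    have : ∑ i, c i < ∑ _i : Fin m, (1:ℝ) :=
      Finset.sum_lt_sum (fun i _ => hcle i) ⟨j, Finset.mem_univ j, hjlt⟩
    rw [hsumc] at this
    simp only [Finset.sum_const, Finset.card_univ, Fintype.card_fin, nsmul_eq_mul, mul_one] at this
    rw [hmk] at this
    exact lt_irrefl _ this
  -- orthonormality
  refine ⟨hmk, ⟨hw_unit, ?_⟩, hc1⟩
  intro i j hij
  have hk := key i
  have hz : ∑ l ∈ Finset.univ.erase i, c l * ⟪w i, w l⟫ ^ 2 = 0 := by
    rw [hc1 i] at hk; linarith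
  have hall : ∀ l ∈ Finset.univ.erase i, c l * ⟪w i, w l⟫ ^ 2 = 0 := by
    intro l hl
    exact (Finset.sum_eq_zero_iff_of_nonneg
      (fun l _ => mul_nonneg (hc_pos l).le (sq_nonneg _))).mp hz l hl
  have := hall j (Finset.mem_erase.mpr ⟨hij.symm ∘ Eq.symm ∘ Eq.symm, Finset.mem_univ j⟩)
  have hcne : c j ≠ 0 := (hc_pos j).ne'
  have : ⟪w i, w j⟫ ^ 2 = 0 := by
    rcases mul_eq_zero.mp this with h | h
    · exact absurd h hcne
    · exact h
  exact pow_eq_zero_iff (by norm_num) |>.mp this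
end
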